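/- arXiv:1405.0905 — 12 statements merged into one kernel-verified Lean document; each statement's English description precedes it below -/
import Mathlib

section
/- If q_{k+1} + q_{k-1} = λ_k J^{-1} q_k with all three points on the pseudo-sphere ⟨q,q⟩ = c, ⟨J^{-2}q_k,q_k⟩ ≠ 0, and λ_k ≠ 0, then ⟨J^{-1}q_{k+1}, q_k⟩ = ⟨J^{-1}q_k, q_{k-1}⟩; i.e., K(q,Q) = ⟨J^{-1}Q, q⟩ is a first integral of the discrete Neumann map. -/
open Finset

theorem stmt1 (n : ℕ) (τ J : Fin n → ℝ)
    (hτ : ∀ i, τ i = 1 ∨ τ i = -1) (hJ : ∀ i, J i ≠ 0)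
    (c : ℝ) (qm q qp : Fin n → ℝ) (lam : ℝ)
    (heq : ∀ i, qp i + qm i = lam * (J i)⁻¹ * q i)
    (hm : ∑ i, τ i * qm i * qm i = c)
    (h0 : ∑ i, τ i * q i * q i = c)
    (hp : ∑ i, τ i * qp i * qp i = c)
    (hden : ∑ i, τ i * ((J i)⁻¹)^2 * q i * q i ≠ 0)
    (hlam : lam ≠ 0) :
    ∑ i, τ i * (J i)⁻¹ * qp i * q i = ∑ i, τ i * (J i)⁻¹ * q i * qm i := by
  have hqp : ∀ i, qp i = lam * (J i)⁻¹ * q i - qm i := fun i => by linarith [heq i]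
  set A := ∑ i, τ i * ((J i)⁻¹)^2 * q i * q i with hA
  set B := ∑ i, τ i * (J i)⁻¹ * q i * qm i with hB
  have h1 : ∑ i, τ i * (J i)⁻¹ * qp i * q i = lam * A - B := by
    rw [hA, hB, Finset.mul_sum, ← Finset.sum_sub_distrib]
    exact Finset.sum_congr rfl fun i _ => by rw [hqp i]; ring
  have h2 : ∑ i, τ i * qp i * qp i
      = lam^2 * A - 2 * lam * B + ∑ i, τ i * qm i * qm i := by
    rw [hA, hB, Finset.mul_sum, Finset.mul_sum, ← Finset.sum_sub_distrib,
      ← Finset.sum_add_distrib]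
    exact Finset.sum_congr rfl fun i _ => by rw [hqp i]; ring
  have h3 : lam * (lam * A - 2 * B) = 0 := by
    have := hp
    rw [h2, hm] at this
    nlinarith [this]
  have h4 : lam * A = 2 * B := by
    rcases mul_eq_zero.mp h3 with h | h
    · exact absurd h hlam
    · linarith
  rw [h1, h4]; ring
end

section
/- On the light-like cone, the square of the discrete Lagrangian L(q,Q) = ⟨q, JQ⟩ is an integral of the Heisenberg model: if ⟨q_{k-1},q_{k-1}⟩ = ⟨q_k,q_k⟩ = 0 and q_{k+1} = λ_k J^{-1}q_k − q_{k-1} with λ_k as above, then ⟨q_k, J q_{k+1}⟩² = ⟨q_{k-1}, J q_k⟩². -/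
/-! Since `q_k` is light-like, the Lagrangian changes sign along the step:
`⟨q_k, J q_{k+1}⟩ = λ_k ⟨q_k, q_k⟩ - ⟨q_{k-1}, J q_k⟩ = -⟨q_{k-1}, J q_k⟩`. -/

open Finset

theorem sum_mul_mul_eq_of_step {ι K : Type*} [Fintype ι] [Field K] (τ J qm q qp : ι → K) (lam : K)
    (hJ : ∀ i, J i ≠ 0) (heq : ∀ i, qp i = lam * (J i)⁻¹ * q i - qm i) :
    ∑ i, τ i * q i * (J i * qp i) = lam * ∑ i, τ i * q i * q i - ∑ i, τ i * qm i * (J i * q i) := by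
  rw [mul_sum, ← sum_sub_distrib]
  refine sum_congr rfl fun i _ => ?_
  rw [heq i]
  field_simp [hJ i]

theorem stmt3_general (n : ℕ) (τ J : Fin n → ℝ)
    (hJ : ∀ i, J i ≠ 0)
    (qm q qp : Fin n → ℝ) (lam : ℝ)
    (heq : ∀ i, qp i = lam * (J i)⁻¹ * q i - qm i)
    (h0 : ∑ i, τ i * q i * q i = 0) :
    (∑ i, τ i * q i * (J i * qp i))^2 = (∑ i, τ i * qm i * (J i * q i))^2 := by
  rw [sum_mul_mul_eq_of_step τ J qm q qp lam hJ heq, h0]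
  ring

theorem stmt3 (n : ℕ) (τ J : Fin n → ℝ)
    (hτ : ∀ i, τ i = 1 ∨ τ i = -1) (hJ : ∀ i, J i ≠ 0)
    (qm q qp : Fin n → ℝ) (lam : ℝ)
    (hden : ∑ i, τ i * ((J i)⁻¹)^2 * q i * q i ≠ 0)
    (hlam : lam = 2 * (∑ i, τ i * (J i)⁻¹ * q i * qm i) /
      (∑ i, τ i * ((J i)⁻¹)^2 * q i * q i))
    (heq : ∀ i, qp i = lam * (J i)⁻¹ * q i - qm i)
    (hm : ∑ i, τ i * qm i * qm i = 0)
    (h0 : ∑ i, τ i * q i * q i = 0) :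
    (∑ i, τ i * q i * (J i * qp i))^2 = (∑ i, τ i * qm i * (J i * q i))^2 :=
  stmt3_general n τ J hJ qm q qp lam heq h0
end

section
/- The functions f_i(q,Q) = c·τ_i q_i² + ∑_{j≠i} τ_i τ_j (J_j Q_j q_i − q_j J_i Q_i)² / (J_i² − J_j²) satisfy the identity ∑_{i=1}^n f_i(q,Q) = c² for all (q,Q) with ⟨q,q⟩ = ⟨Q,Q⟩ = c. -/
open Finset

theorem stmt4 (n : ℕ) (τ J : Fin n → ℝ)
    (hτ : ∀ i, τ i = 1 ∨ τ i = -1)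
    (hJ : ∀ i j, i ≠ j → (J i)^2 ≠ (J j)^2)
    (c : ℝ) (hc : c = -1 ∨ c = 0 ∨ c = 1)
    (q Q : Fin n → ℝ)
    (hq : ∑ i, τ i * q i * q i = c)
    (hQ : ∑ i, τ i * Q i * Q i = c) :
    ∑ i, (c * τ i * (q i)^2 +
      ∑ j ∈ Finset.univ.erase i,
        τ i * τ j * (J j * Q j * q i - q j * J i * Q i)^2 / ((J i)^2 - (J j)^2))
      = c^2 := by
  set f : Fin n → Fin n → ℝ := fun i j =>
    τ i * τ j * (J j * Q j * q i - q j * J i * Q i)^2 / ((J i)^2 - (J j)^2) with hf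
  have hdiag : ∀ i, f i i = 0 := by
    intro i
    simp [hf]
  have hanti : ∀ i j, f i j = - f j i := by
    intro i j
    simp only [hf]
    rw [show (J j)^2 - (J i)^2 = -((J i)^2 - (J j)^2) from by ring, div_neg,
      show (J i * Q i * q j - q i * J j * Q j)^2
          = (J j * Q j * q i - q j * J i * Q i)^2 from by ring, neg_neg,
      mul_comm (τ j) (τ i)]
  have h2 : ∑ i, ∑ j ∈ Finset.univ.erase i, f i j = 0 := by
    have herase : ∀ i : Fin n, ∑ j ∈ Finset.univ.erase i, f i j = ∑ j, f i j := by
      intro i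
      exact Finset.sum_erase _ (hdiag i)
    simp_rw [herase]
    have hneg : ∑ i, ∑ j, f i j = - ∑ i, ∑ j, f i j := by
      nth_rewrite 1 [Finset.sum_comm]
      have : ∑ i, ∑ j, f j i = ∑ i, ∑ j, (- f i j) :=
        Finset.sum_congr rfl fun i _ => Finset.sum_congr rfl fun j _ => hanti j i
      rw [this]
      simp [Finset.sum_neg_distrib]
    linarith
  calc ∑ i, (c * τ i * (q i)^2 + ∑ j ∈ Finset.univ.erase i, f i j)
      = ∑ i, c * τ i * (q i)^2 + ∑ i, ∑ j ∈ Finset.univ.erase i, f i j :=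
        Finset.sum_add_distrib
    _ = ∑ i, c * (τ i * q i * q i) + 0 := by
        rw [h2]; congr 1; apply Finset.sum_congr rfl; intros; ring
    _ = c^2 := by rw [← Finset.mul_sum, hq]; ring
end

section
/- The functions f_i(q,Q) = c·τ_i q_i² + ∑_{j≠i} τ_i τ_j (J_j Q_j q_i − q_j J_i Q_i)² / (J_i² − J_j²) satisfy ∑_{i=1}^n f_i(q,Q)/J_i² = K(q,Q)², where K(q,Q) = ⟨J^{-1}Q, q⟩, for all (q,Q) with ⟨q,q⟩ = ⟨Q,Q⟩ = c. -/
open Finset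

theorem stmt5 (n : ℕ) (τ J : Fin n → ℝ)
    (hτ : ∀ i, τ i = 1 ∨ τ i = -1) (hJ0 : ∀ i, J i ≠ 0)
    (hJ : ∀ i j, i ≠ j → (J i)^2 ≠ (J j)^2)
    (c : ℝ) (q Q : Fin n → ℝ)
    (hq : ∑ i, τ i * q i * q i = c)
    (hQ : ∑ i, τ i * Q i * Q i = c) :
    ∑ i, (c * τ i * (q i)^2 +
      ∑ j ∈ Finset.univ.erase i,
        τ i * τ j * (J j * Q j * q i - q j * J i * Q i)^2 / ((J i)^2 - (J j)^2))
      / (J i)^2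
      = (∑ i, τ i * (J i)⁻¹ * Q i * q i)^2 := by
  have hne : ∀ i j : Fin n, i ≠ j → (J i)^2 - (J j)^2 ≠ 0 :=
    fun i j h => sub_ne_zero.mpr (hJ i j h)
  set T : Fin n → Fin n → ℝ := fun i j =>
    τ i * τ j * (J j * Q j * q i - q j * J i * Q i)^2 / (((J i)^2 - (J j)^2) * (J i)^2) with hT
  set v : Fin n → Fin n → ℝ := fun i j =>
    τ i * τ j * (J j * Q j * q i - q j * J i * Q i)^2 / (2 * (J i)^2 * (J j)^2) with hv
  set u : Fin n → Fin n → ℝ := fun i j =>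
    τ i * τ j * (q i)^2 * (Q j)^2 / (J i)^2 with hu
  set k : Fin n → Fin n → ℝ := fun i j =>
    (τ i * (J i)⁻¹ * Q i * q i) * (τ j * (J j)⁻¹ * Q j * q j) with hk
  -- Step A: split LHS
  have stepA : ∑ i, (c * τ i * (q i)^2 +
      ∑ j ∈ Finset.univ.erase i,
        τ i * τ j * (J j * Q j * q i - q j * J i * Q i)^2 / ((J i)^2 - (J j)^2))
      / (J i)^2
      = (∑ i, c * τ i * (q i)^2 / (J i)^2) +
        ∑ i, ∑ j ∈ Finset.univ.erase i, T i j := by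
    rw [← Finset.sum_add_distrib]
    refine Finset.sum_congr rfl fun i _ => ?_
    rw [add_div, Finset.sum_div]
    congr 1
    refine Finset.sum_congr rfl fun j _ => ?_
    rw [hT]
    simp only
    rw [div_div]
  -- Step B: symmetrize double sum
  have hswap : ∑ i, ∑ j ∈ Finset.univ.erase i, T i j
      = ∑ i, ∑ j ∈ Finset.univ.erase i, T j i := by
    refine Finset.sum_comm' ?_
    intro i j
    simp [Finset.mem_erase, eq_comm, ne_comm, and_comm]
  have hvii : ∀ i : Fin n, -(2 * v i i) = 0 := by
    intro i
    have : J i * Q i * q i - q i * J i * Q i = 0 := by ring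
    simp [hv, this]
  have stepB : ∑ i, ∑ j ∈ Finset.univ.erase i, T i j = - ∑ i, ∑ j, v i j := by
    have h2 : 2 * (∑ i, ∑ j ∈ Finset.univ.erase i, T i j)
        = ∑ i, ∑ j ∈ Finset.univ.erase i, (T i j + T j i) := by
      rw [two_mul]
      nth_rewrite 2 [hswap]
      rw [← Finset.sum_add_distrib]
      refine Finset.sum_congr rfl fun i _ => ?_
      rw [← Finset.sum_add_distrib]
    have h3 : ∀ i j : Fin n, i ≠ j → T i j + T j i = -(2 * v i j) := by
      intro i j hij
      simp only [hT, hv]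
      have h1 := hne i j hij
      have h2 := hne j i hij.symm
      have h0i := hJ0 i
      have h0j := hJ0 j
      field_simp
      ring
    have h4 : ∑ i, ∑ j ∈ Finset.univ.erase i, (T i j + T j i)
        = ∑ i, ∑ j, -(2 * v i j) := by
      refine Finset.sum_congr rfl fun i _ => ?_
      rw [← Finset.sum_erase (a := i) Finset.univ (hvii i)]
      refine Finset.sum_congr rfl fun j hj => ?_
      exact h3 i j (fun h => (Finset.mem_erase.mp hj).1 h.symm)
    have h5 : ∑ i : Fin n, ∑ j : Fin n, -(2 * v i j)
        = -(2 * ∑ i : Fin n, ∑ j : Fin n, v i j) := by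
      rw [Finset.mul_sum, ← Finset.sum_neg_distrib]
      refine Finset.sum_congr rfl fun i _ => ?_
      rw [Finset.mul_sum, ← Finset.sum_neg_distrib]
    have := h2.trans (h4.trans h5)
    linarith
  -- Step C: c-part equals double sum of u
  have stepC : (∑ i, c * τ i * (q i)^2 / (J i)^2) = ∑ i, ∑ j, u i j := by
    refine Finset.sum_congr rfl fun i _ => ?_
    rw [← hQ, Finset.sum_mul, Finset.sum_mul, Finset.sum_div]
    refine Finset.sum_congr rfl fun j _ => ?_
    simp only [hu]
    ring
  -- Step D: RHS as double sum
  have stepD : (∑ i, τ i * (J i)⁻¹ * Q i * q i)^2 = ∑ i, ∑ j, k i j := by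
    rw [sq, Finset.sum_mul_sum]
  -- Step E: cancellation
  have stepE : ∑ i, ∑ j, (u i j - v i j - k i j) = 0 := by
    set w : Fin n → Fin n → ℝ := fun i j =>
      τ i * τ j * (q i)^2 * (Q j)^2 / (2 * (J i)^2) with hw
    have hg : ∀ i j : Fin n, u i j - v i j - k i j = w i j - w j i := by
      intro i j
      simp only [hu, hv, hk, hw]
      have h1 := hJ0 i
      have h2 := hJ0 j
      field_simp
      ring
    simp_rw [hg]
    simp_rw [Finset.sum_sub_distrib]
    rw [Finset.sum_comm (f := fun i j => w j i)]
    simp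
  rw [stepA, stepB, stepC, stepD]
  simp_rw [Finset.sum_sub_distrib] at stepE
  linarith
end

section
/- For c = 0 (both q and Q light-like), the integrals f_i(q,Q) = ∑_{j≠i} τ_i τ_j (J_j Q_j q_i − q_j J_i Q_i)²/(J_i² − J_j²) satisfy ∑_{i=1}^n J_i² f_i(q,Q) = −⟨q, JQ⟩². -/
open Finset

/-!
Since `a i / (a i - a j) + a j / (a j - a i) = 1`, symmetrising the double sum in `i, j` removes
the denominators: `2 ∑ᵢ J_i² f_i` becomes the full double sum `∑ᵢ ∑ⱼ τ_i τ_j (J_j Q_j q_i - q_j J_i Q_i)²`.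
By the Lagrange identity for the form `⟨·,·⟩` this equals `2 (⟨q,q⟩⟨JQ,JQ⟩ - ⟨q,JQ⟩²)`,
which is `-2 ⟨q,JQ⟩²` as `q` is light-like.
-/

theorem sum_sum_mul_mul_sub_mul_sq {ι R : Type*} [Fintype ι] [CommRing R] (w a b : ι → R) :
    ∑ i, ∑ j, w i * w j * (a j * b i - b j * a i) ^ 2
      = 2 * ((∑ i, w i * b i * b i) * (∑ i, w i * a i * a i) - (∑ i, w i * b i * a i) ^ 2) := by
  have hexpand : ∀ i j, w i * w j * (a j * b i - b j * a i) ^ 2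
      = w i * b i * b i * (w j * a j * a j) + w j * b j * b j * (w i * a i * a i)
        - 2 * (w i * b i * a i * (w j * b j * a j)) := fun i j => by ring
  simp only [hexpand, sum_sub_distrib, sum_add_distrib, ← mul_sum, ← sum_mul]
  ring

theorem two_mul_sum_mul_sum_erase_div_sub {ι K : Type*} [Fintype ι] [DecidableEq ι] [Field K]
    (a : ι → K) (ha : ∀ i j, i ≠ j → a i ≠ a j) (g : ι → ι → K) (hg : ∀ i j, g i j = g j i) :
    2 * ∑ i, a i * ∑ j ∈ univ.erase i, g i j / (a i - a j) = ∑ i, ∑ j ∈ univ.erase i, g i j := by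
  set F : ι → ι → K := fun i j => a i * (g i j / (a i - a j))
  have hpair : ∀ i j, F i j + F j i = if i = j then 0 else g i j := by
    intro i j
    split_ifs with hij
    · subst hij; simp [F]
    · have h₁ : a i - a j ≠ 0 := sub_ne_zero.mpr (ha i j hij)
      have h₂ : a j - a i ≠ 0 := sub_ne_zero.mpr (ha j i (Ne.symm hij))
      simp only [F, hg j i]
      field_simp
      ring
  -- the diagonal term `a i * (g i i / 0)` is `0`
  have hfull : ∀ i, a i * ∑ j ∈ univ.erase i, g i j / (a i - a j) = ∑ j, F i j := fun i => by
    rw [mul_sum]; exact sum_erase _ (by simp)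
  calc 2 * ∑ i, a i * ∑ j ∈ univ.erase i, g i j / (a i - a j)
      = ∑ i, ∑ j, F i j + ∑ i, ∑ j, F j i := by
        simp only [hfull]; rw [sum_comm (f := fun i j => F j i)]; ring
    _ = ∑ i, ∑ j, (if i = j then 0 else g i j) := by simp only [← hpair, sum_add_distrib]
    _ = ∑ i, ∑ j ∈ univ.erase i, g i j := by
        refine sum_congr rfl fun i _ => ?_
        rw [sum_ite, sum_const_zero, zero_add, filter_ne]

theorem stmt6_general (n : ℕ) (τ J : Fin n → ℝ)
    (hJ : ∀ i j, i ≠ j → (J i)^2 ≠ (J j)^2)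
    (q Q : Fin n → ℝ)
    (hq : ∑ i, τ i * q i * q i = 0) :
    ∑ i, (J i)^2 *
      (∑ j ∈ Finset.univ.erase i,
        τ i * τ j * (J j * Q j * q i - q j * J i * Q i)^2 / ((J i)^2 - (J j)^2))
      = -(∑ i, τ i * q i * (J i * Q i))^2 := by
  set g : Fin n → Fin n → ℝ := fun i j => τ i * τ j * (J j * Q j * q i - q j * J i * Q i) ^ 2
  have hsymm := two_mul_sum_mul_sum_erase_div_sub (fun i => J i ^ 2) hJ g
    fun i j => by simp only [g]; ring
  have herase : ∀ i, ∑ j ∈ univ.erase i, g i j = ∑ j, g i j :=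
    fun i => sum_erase _ (by simp only [g]; ring)
  have hlagrange : ∑ i, ∑ j, g i j = -2 * (∑ i, τ i * q i * (J i * Q i)) ^ 2 :=
    calc ∑ i, ∑ j, g i j
        = ∑ i, ∑ j, τ i * τ j * (J j * Q j * q i - q j * (J i * Q i)) ^ 2 := by
          simp only [g, mul_assoc]
      _ = 2 * ((∑ i, τ i * q i * q i) * (∑ i, τ i * (J i * Q i) * (J i * Q i))
            - (∑ i, τ i * q i * (J i * Q i)) ^ 2) :=
          sum_sum_mul_mul_sub_mul_sq τ (fun i => J i * Q i) q
      _ = -2 * (∑ i, τ i * q i * (J i * Q i)) ^ 2 := by rw [hq]; ring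
  simp only [herase] at hsymm
  linear_combination hsymm / 2 + hlagrange / 2

theorem stmt6 (n : ℕ) (τ J : Fin n → ℝ)
    (hτ : ∀ i, τ i = 1 ∨ τ i = -1)
    (hJ : ∀ i j, i ≠ j → (J i)^2 ≠ (J j)^2)
    (q Q : Fin n → ℝ)
    (hq : ∑ i, τ i * q i * q i = 0)
    (hQ : ∑ i, τ i * Q i * Q i = 0) :
    ∑ i, (J i)^2 *
      (∑ j ∈ Finset.univ.erase i,
        τ i * τ j * (J j * Q j * q i - q j * J i * Q i)^2 / ((J i)^2 - (J j)^2))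
      = -(∑ i, τ i * q i * (J i * Q i))^2 :=
  stmt6_general n τ J hJ q Q hq
end

section
/- Each f_i(q,Q) = c·τ_i q_i² + ∑_{j≠i} τ_i τ_j (J_j Q_j q_i − q_j J_i Q_i)²/(J_i² − J_j²) is an integral of the discrete Neumann system: if ⟨q,q⟩ = ⟨Q,Q⟩ = c, ⟨J^{-2}Q,Q⟩ ≠ 0, λ = 2⟨J^{-1}Q,q⟩/⟨J^{-2}Q,Q⟩, and Q' = λ J^{-1}Q − q, then f_i(Q, Q') = f_i(q, Q) for every i. -/
open Finset

theorem stmt7 (n : ℕ) (τ J : Fin n → ℝ)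
    (hτ : ∀ i, τ i = 1 ∨ τ i = -1) (hJ0 : ∀ i, J i ≠ 0)
    (hJ : ∀ i j, i ≠ j → (J i)^2 ≠ (J j)^2)
    (c : ℝ) (q Q Q' : Fin n → ℝ) (lam : ℝ)
    (hq : ∑ i, τ i * q i * q i = c)
    (hQ : ∑ i, τ i * Q i * Q i = c)
    (hden : ∑ i, τ i * ((J i)⁻¹)^2 * Q i * Q i ≠ 0)
    (hlam : lam = 2 * (∑ i, τ i * (J i)⁻¹ * Q i * q i) /
      (∑ i, τ i * ((J i)⁻¹)^2 * Q i * Q i))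
    (hQ' : ∀ i, Q' i = lam * (J i)⁻¹ * Q i - q i) :
    ∀ i, (c * τ i * (Q i)^2 +
      ∑ j ∈ Finset.univ.erase i,
        τ i * τ j * (J j * Q' j * Q i - Q j * J i * Q' i)^2 / ((J i)^2 - (J j)^2))
      = (c * τ i * (q i)^2 +
      ∑ j ∈ Finset.univ.erase i,
        τ i * τ j * (J j * Q j * q i - q j * J i * Q i)^2 / ((J i)^2 - (J j)^2)) := by
  intro i
  have key : ∀ j ∈ Finset.univ.erase i,
      τ i * τ j * (J j * Q' j * Q i - Q j * J i * Q' i)^2 / ((J i)^2 - (J j)^2)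
      = τ i * τ j * (J j * Q j * q i - q j * J i * Q i)^2 / ((J i)^2 - (J j)^2)
        + τ i * τ j * ((Q j)^2 * (q i)^2 - (q j)^2 * (Q i)^2) := by
    intro j hj
    have hji : j ≠ i := (Finset.mem_erase.mp hj).1
    have hne : (J i)^2 - (J j)^2 ≠ 0 := sub_ne_zero.mpr (hJ i j hji.symm)
    rw [hQ' i, hQ' j]
    have hJi := hJ0 i
    have hJj := hJ0 j
    field_simp
    ring
  rw [Finset.sum_congr rfl key, Finset.sum_add_distrib]
  have hqi : ∑ j ∈ Finset.univ.erase i, τ j * q j * q j = c - τ i * q i * q i := by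
    rw [Finset.sum_erase_eq_sub (Finset.mem_univ i), hq]
  have hQi : ∑ j ∈ Finset.univ.erase i, τ j * Q j * Q j = c - τ i * Q i * Q i := by
    rw [Finset.sum_erase_eq_sub (Finset.mem_univ i), hQ]
  have hT : ∑ j ∈ Finset.univ.erase i,
      τ i * τ j * ((Q j)^2 * (q i)^2 - (q j)^2 * (Q i)^2)
      = c * τ i * (q i)^2 - c * τ i * (Q i)^2 := by
    have hsplit : ∀ j, τ i * τ j * ((Q j)^2 * (q i)^2 - (q j)^2 * (Q i)^2)
        = (τ i * (q i)^2) * (τ j * Q j * Q j) - (τ i * (Q i)^2) * (τ j * q j * q j) := by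
      intro j; ring
    simp_rw [hsplit]
    rw [Finset.sum_sub_distrib, ← Finset.mul_sum, ← Finset.mul_sum, hQi, hqi]
    ring
  rw [hT]
  ring
end

section
/- The discrete Neumann equation implies the discrete Lax equation: if q_{k+1} + q_{k-1} = λ_k J^{-1} q_k with all points on ⟨q,q⟩ = c, then L_{k+1}(λ) A_k(λ) = A_k(λ) L_k(λ) for all λ ∈ ℂ, where L_k(λ) = J² + λ Fq_{k-1} ∧ FJq_k − λ² c Fq_{k-1}⊗Fq_{k-1} and A_k(λ) = J − λ Fq_k⊗Fq_{k-1}. -/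
open Finset Matrix

theorem stmt9 (n : ℕ) (τ : Fin n → ℝ) (J : Fin n → ℝ)
    (hτ : ∀ i, τ i = 1 ∨ τ i = -1) (hJ : ∀ i, J i ≠ 0)
    (F : Fin n → ℂ)
    (hF : ∀ i, F i = 1 ∨ F i = Complex.I)
    (hF2 : ∀ i, (F i)^2 = (τ i : ℂ))
    (c : ℝ) (qm q qp : Fin n → ℝ) (lamk : ℝ)
    (heq : ∀ i, qp i + qm i = lamk * (J i)⁻¹ * q i)
    (hm : ∑ i, τ i * qm i * qm i = c)
    (h0 : ∑ i, τ i * q i * q i = c)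
    (hp : ∑ i, τ i * qp i * qp i = c)
    (Lk Lk1 : ℂ → Matrix (Fin n) (Fin n) ℂ)
    (Ak : ℂ → Matrix (Fin n) (Fin n) ℂ)
    (hAk : ∀ lam i j, Ak lam i j =
      (if i = j then (J i : ℂ) else 0) - lam * (F i * (q i : ℂ)) * (F j * (qm j : ℂ)))
    (hLk : ∀ lam i j, Lk lam i j =
      (if i = j then ((J i : ℂ))^2 else 0)
      + lam * ((F i * (qm i : ℂ)) * (F j * (J j : ℂ) * (q j : ℂ))
               - (F i * (J i : ℂ) * (q i : ℂ)) * (F j * (qm j : ℂ)))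
      - lam^2 * (c : ℂ) * (F i * (qm i : ℂ)) * (F j * (qm j : ℂ)))
    (hLk1 : ∀ lam i j, Lk1 lam i j =
      (if i = j then ((J i : ℂ))^2 else 0)
      + lam * ((F i * (q i : ℂ)) * (F j * (J j : ℂ) * (qp j : ℂ))
               - (F i * (J i : ℂ) * (qp i : ℂ)) * (F j * (q j : ℂ)))
      - lam^2 * (c : ℂ) * (F i * (q i : ℂ)) * (F j * (q j : ℂ))) :
    ∀ lam : ℂ, Lk1 lam * Ak lam = Ak lam * Lk lam := by
  intro lam
  have hb2 : ∑ l, (F l * (q l : ℂ)) * (F l * (q l : ℂ)) = (c : ℂ) := by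
    have h := congrArg (fun x : ℝ => (x : ℂ)) h0
    push_cast at h
    rw [← h]
    exact Finset.sum_congr rfl fun l _ => by
      linear_combination ((q l : ℂ) * (q l : ℂ)) * hF2 l
  have ha2 : ∑ l, (F l * (qm l : ℂ)) * (F l * (qm l : ℂ)) = (c : ℂ) := by
    have h := congrArg (fun x : ℝ => (x : ℂ)) hm
    push_cast at h
    rw [← h]
    exact Finset.sum_congr rfl fun l _ => by
      linear_combination ((qm l : ℂ) * (qm l : ℂ)) * hF2 l
  have hpt : ∀ l, (J l : ℂ) * (F l * (qp l : ℂ) + F l * (qm l : ℂ))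
      = (lamk : ℂ) * (F l * (q l : ℂ)) := by
    intro l
    have h1 : (J l) * (qp l + qm l) = lamk * q l := by
      rw [heq l]; field_simp [hJ l]
    have h2 : (J l : ℂ) * ((qp l : ℂ) + (qm l : ℂ)) = (lamk : ℂ) * (q l : ℂ) := by
      exact_mod_cast h1
    linear_combination F l * h2
  have hS : (∑ l, (J l : ℂ) * (F l * (qp l : ℂ)) * (F l * (q l : ℂ)))
      + (∑ l, (J l : ℂ) * (F l * (qm l : ℂ)) * (F l * (q l : ℂ)))
      = (lamk : ℂ) * (c : ℂ) := by
    rw [← Finset.sum_add_distrib]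
    calc ∑ l, ((J l : ℂ) * (F l * (qp l : ℂ)) * (F l * (q l : ℂ))
          + (J l : ℂ) * (F l * (qm l : ℂ)) * (F l * (q l : ℂ)))
        = ∑ l, (lamk : ℂ) * ((F l * (q l : ℂ)) * (F l * (q l : ℂ))) :=
          Finset.sum_congr rfl fun l _ => by
            linear_combination (F l * (q l : ℂ)) * hpt l
      _ = (lamk : ℂ) * (c : ℂ) := by rw [← Finset.mul_sum, hb2]
  ext i j
  rw [Matrix.mul_apply, Matrix.mul_apply]
  have hLHS : ∑ l, Lk1 lam i l * Ak lam l j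
      = ((J i : ℂ))^2 * ((if i = j then (J i : ℂ) else 0)
          - lam * (F i * (q i : ℂ)) * (F j * (qm j : ℂ)))
        + (lam * ((F i * (q i : ℂ)) * (F j * (J j : ℂ) * (qp j : ℂ))
              - (F i * (J i : ℂ) * (qp i : ℂ)) * (F j * (q j : ℂ)))
            - lam^2 * (c : ℂ) * (F i * (q i : ℂ)) * (F j * (q j : ℂ))) * (J j : ℂ)
        + ((-(lam^2) * (F j * (qm j : ℂ)) * (F i * (q i : ℂ)))
            * (∑ l, (J l : ℂ) * (F l * (qp l : ℂ)) * (F l * (q l : ℂ)))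
          + (lam^2 * (F j * (qm j : ℂ)) * (F i * (J i : ℂ) * (qp i : ℂ))
              + lam^3 * (c : ℂ) * (F j * (qm j : ℂ)) * (F i * (q i : ℂ)))
            * (∑ l, (F l * (q l : ℂ)) * (F l * (q l : ℂ)))) := by
    calc ∑ l, Lk1 lam i l * Ak lam l j
        = ∑ l, ((if i = l then ((J i : ℂ))^2 * ((if l = j then (J l : ℂ) else 0)
              - lam * (F l * (q l : ℂ)) * (F j * (qm j : ℂ))) else 0)
          + (if l = j then (lam * ((F i * (q i : ℂ)) * (F l * (J l : ℂ) * (qp l : ℂ))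
              - (F i * (J i : ℂ) * (qp i : ℂ)) * (F l * (q l : ℂ)))
            - lam^2 * (c : ℂ) * (F i * (q i : ℂ)) * (F l * (q l : ℂ))) * (J l : ℂ) else 0)
          + ((-(lam^2) * (F j * (qm j : ℂ)) * (F i * (q i : ℂ)))
              * ((J l : ℂ) * (F l * (qp l : ℂ)) * (F l * (q l : ℂ)))
            + (lam^2 * (F j * (qm j : ℂ)) * (F i * (J i : ℂ) * (qp i : ℂ))
                + lam^3 * (c : ℂ) * (F j * (qm j : ℂ)) * (F i * (q i : ℂ)))
              * ((F l * (q l : ℂ)) * (F l * (q l : ℂ))))) := by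
          refine Finset.sum_congr rfl fun l _ => ?_
          rw [hLk1, hAk]
          by_cases h2 : l = j
          · subst h2
            by_cases h1 : i = l
            · subst h1
              simp only [eq_self_iff_true, if_true]
              ring
            · simp only [if_neg h1, eq_self_iff_true, if_true]
              ring
          · by_cases h1 : i = l
            · subst h1
              simp only [eq_self_iff_true, if_true, if_neg h2]
              ring
            · simp only [if_neg h1, if_neg h2]
              ring
      _ = _ := by
          rw [Finset.sum_add_distrib, Finset.sum_add_distrib, Finset.sum_ite_eq,
            Finset.sum_ite_eq', Finset.sum_add_distrib, ← Finset.mul_sum, ← Finset.mul_sum]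
          simp only [Finset.mem_univ, if_true]
  have hRHS : ∑ l, Ak lam i l * Lk lam l j
      = (J i : ℂ) * ((if i = j then ((J i : ℂ))^2 else 0)
          + lam * ((F i * (qm i : ℂ)) * (F j * (J j : ℂ) * (q j : ℂ))
              - (F i * (J i : ℂ) * (q i : ℂ)) * (F j * (qm j : ℂ)))
          - lam^2 * (c : ℂ) * (F i * (qm i : ℂ)) * (F j * (qm j : ℂ)))
        + (-lam * (F i * (q i : ℂ)) * (F j * (qm j : ℂ)) * ((J j : ℂ))^2)
        + ((lam^2 * (F i * (q i : ℂ)) * (F j * (qm j : ℂ)))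
            * (∑ l, (J l : ℂ) * (F l * (qm l : ℂ)) * (F l * (q l : ℂ)))
          + (-(lam^2) * (F i * (q i : ℂ)) * (J j : ℂ) * (F j * (q j : ℂ))
              + lam^3 * (c : ℂ) * (F i * (q i : ℂ)) * (F j * (qm j : ℂ)))
            * (∑ l, (F l * (qm l : ℂ)) * (F l * (qm l : ℂ)))) := by
    calc ∑ l, Ak lam i l * Lk lam l j
        = ∑ l, ((if i = l then (J i : ℂ) * ((if l = j then ((J l : ℂ))^2 else 0)
              + lam * ((F l * (qm l : ℂ)) * (F j * (J j : ℂ) * (q j : ℂ))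
                  - (F l * (J l : ℂ) * (q l : ℂ)) * (F j * (qm j : ℂ)))
              - lam^2 * (c : ℂ) * (F l * (qm l : ℂ)) * (F j * (qm j : ℂ))) else 0)
          + (if l = j then -lam * (F i * (q i : ℂ)) * (F l * (qm l : ℂ)) * ((J l : ℂ))^2 else 0)
          + ((lam^2 * (F i * (q i : ℂ)) * (F j * (qm j : ℂ)))
              * ((J l : ℂ) * (F l * (qm l : ℂ)) * (F l * (q l : ℂ)))
            + (-(lam^2) * (F i * (q i : ℂ)) * (J j : ℂ) * (F j * (q j : ℂ))
                + lam^3 * (c : ℂ) * (F i * (q i : ℂ)) * (F j * (qm j : ℂ)))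
              * ((F l * (qm l : ℂ)) * (F l * (qm l : ℂ))))) := by
          refine Finset.sum_congr rfl fun l _ => ?_
          rw [hLk, hAk]
          by_cases h2 : l = j
          · subst h2
            by_cases h1 : i = l
            · subst h1
              simp only [eq_self_iff_true, if_true]
              ring
            · simp only [if_neg h1, eq_self_iff_true, if_true]
              ring
          · by_cases h1 : i = l
            · subst h1
              simp only [eq_self_iff_true, if_true, if_neg h2]
              ring
            · simp only [if_neg h1, if_neg h2]
              ring
      _ = _ := by
          rw [Finset.sum_add_distrib, Finset.sum_add_distrib, Finset.sum_ite_eq,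
            Finset.sum_ite_eq', Finset.sum_add_distrib, ← Finset.mul_sum, ← Finset.mul_sum]
          simp only [Finset.mem_univ, if_true]
  rw [hLHS, hRHS]
  by_cases hij : i = j
  · simp only [if_pos hij]
    linear_combination (lam * (J j : ℂ) * (F i * (q i : ℂ))) * hpt j
        + (-(lam * (J j : ℂ) * (F j * (q j : ℂ))) + lam^2 * (c : ℂ) * (F j * (qm j : ℂ))) * hpt i
        + (-(lam^2) * (F j * (qm j : ℂ)) * (F i * (q i : ℂ))) * hS
        + (lam^2 * (F j * (qm j : ℂ)) * (F i * (J i : ℂ) * (qp i : ℂ))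
            + lam^3 * (c : ℂ) * (F j * (qm j : ℂ)) * (F i * (q i : ℂ))) * hb2
        + (lam^2 * (F i * (q i : ℂ)) * (J j : ℂ) * (F j * (q j : ℂ))
            - lam^3 * (c : ℂ) * (F j * (qm j : ℂ)) * (F i * (q i : ℂ))) * ha2
  · simp only [if_neg hij]
    linear_combination (lam * (J j : ℂ) * (F i * (q i : ℂ))) * hpt j
        + (-(lam * (J j : ℂ) * (F j * (q j : ℂ))) + lam^2 * (c : ℂ) * (F j * (qm j : ℂ))) * hpt i
        + (-(lam^2) * (F j * (qm j : ℂ)) * (F i * (q i : ℂ))) * hS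
        + (lam^2 * (F j * (qm j : ℂ)) * (F i * (J i : ℂ) * (qp i : ℂ))
            + lam^3 * (c : ℂ) * (F j * (qm j : ℂ)) * (F i * (q i : ℂ))) * hb2
        + (lam^2 * (F i * (q i : ℂ)) * (J j : ℂ) * (F j * (q j : ℂ))
            - lam^3 * (c : ℂ) * (F j * (qm j : ℂ)) * (F i * (q i : ℂ))) * ha2
end

section
/- The Lax matrices satisfy L_{k+1}(λ) = A_{k+1}(−λ)^T A_{k+1}(λ) = A_k(λ) A_k(−λ)^T, so the discrete dynamics is an interchange of factors: A_k(λ)A_k(−λ)^T = A_{k+1}(−λ)^T A_{k+1}(λ), for solutions of the discrete Neumann system on ⟨q,q⟩ = c. -/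
open Finset Matrix

theorem stmt10 (n : ℕ) (τ : Fin n → ℝ) (J : Fin n → ℝ)
    (hτ : ∀ i, τ i = 1 ∨ τ i = -1) (hJ : ∀ i, J i ≠ 0)
    (F : Fin n → ℂ)
    (hF : ∀ i, F i = 1 ∨ F i = Complex.I)
    (hF2 : ∀ i, (F i)^2 = (τ i : ℂ))
    (c : ℝ) (qm q qp : Fin n → ℝ) (lamk : ℝ)
    (hden : ∑ i, τ i * ((J i)⁻¹)^2 * q i * q i ≠ 0)
    (hlamk : lamk = 2 * (∑ i, τ i * (J i)⁻¹ * q i * qm i) /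
      (∑ i, τ i * ((J i)⁻¹)^2 * q i * q i))
    (heq : ∀ i, qp i + qm i = lamk * (J i)⁻¹ * q i)
    (hm : ∑ i, τ i * qm i * qm i = c)
    (h0 : ∑ i, τ i * q i * q i = c)
    (hp : ∑ i, τ i * qp i * qp i = c)
    (Ak Ak1 : ℂ → Matrix (Fin n) (Fin n) ℂ)
    (hAk : ∀ lam i j, Ak lam i j =
      (if i = j then (J i : ℂ) else 0) - lam * (F i * (q i : ℂ)) * (F j * (qm j : ℂ)))
    (hAk1 : ∀ lam i j, Ak1 lam i j =
      (if i = j then (J i : ℂ) else 0) - lam * (F i * (qp i : ℂ)) * (F j * (q j : ℂ))) :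
    ∀ lam : ℂ, Ak lam * (Ak (-lam))ᵀ = (Ak1 (-lam))ᵀ * Ak1 lam := by
  intro lam
  have hcm : ∑ m, (F m * (qm m:ℂ)) * (F m * (qm m:ℂ)) = (c:ℂ) := by
    rw [← hm]; push_cast
    exact Finset.sum_congr rfl fun m _ => by rw [← hF2]; ring
  have hcp : ∑ m, (F m * (qp m:ℂ)) * (F m * (qp m:ℂ)) = (c:ℂ) := by
    rw [← hp]; push_cast
    exact Finset.sum_congr rfl fun m _ => by rw [← hF2]; ring
  have key : ∀ a b : Fin n, (J a : ℝ) * q b * (qm a + qp a) = J b * q a * (qm b + qp b) := by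
    intro a b
    have e1 : J a * (qp a + qm a) = lamk * q a := by
      rw [heq a, show J a * (lamk * (J a)⁻¹ * q a) = J a * (J a)⁻¹ * (lamk * q a) from by ring,
        mul_inv_cancel₀ (hJ a), one_mul]
    have e2 : J b * (qp b + qm b) = lamk * q b := by
      rw [heq b, show J b * (lamk * (J b)⁻¹ * q b) = J b * (J b)⁻¹ * (lamk * q b) from by ring,
        mul_inv_cancel₀ (hJ b), one_mul]
    linear_combination q b * e1 - q a * e2
  ext i j
  simp only [mul_apply, transpose_apply, hAk, hAk1]
  have L : ∑ m : Fin n,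
      ((if i = m then (J i:ℂ) else 0) - lam * (F i * (q i:ℂ)) * (F m * (qm m:ℂ))) *
      ((if j = m then (J j:ℂ) else 0) - (-lam) * (F j * (q j:ℂ)) * (F m * (qm m:ℂ)))
      = (if i = j then (J i:ℂ) * J j else 0)
        + lam * (F j * (q j:ℂ)) * ((J i:ℂ) * (F i * (qm i:ℂ)))
        - lam * (F i * (q i:ℂ)) * ((J j:ℂ) * (F j * (qm j:ℂ)))
        - lam^2 * ((F i * (q i:ℂ)) * (F j * (q j:ℂ))) * (c:ℂ) := by
    rw [Finset.sum_congr rfl (fun m _ => show _ =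
      (if i = m then (J i:ℂ) else 0) * (if j = m then (J j:ℂ) else 0)
      + lam * (F j * (q j:ℂ)) * ((if i = m then (J i:ℂ) else 0) * (F m * (qm m:ℂ)))
      - lam * (F i * (q i:ℂ)) * ((if j = m then (J j:ℂ) else 0) * (F m * (qm m:ℂ)))
      - lam^2 * ((F i * (q i:ℂ)) * (F j * (q j:ℂ))) * ((F m * (qm m:ℂ)) * (F m * (qm m:ℂ)))
      from by ring)]
    rw [Finset.sum_sub_distrib, Finset.sum_sub_distrib, Finset.sum_add_distrib,
      ← Finset.mul_sum, ← Finset.mul_sum, ← Finset.mul_sum, hcm]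
    simp [ite_mul, Finset.sum_ite_eq]
  have R : ∑ m : Fin n,
      ((if m = i then (J m:ℂ) else 0) - (-lam) * (F m * (qp m:ℂ)) * (F i * (q i:ℂ))) *
      ((if m = j then (J m:ℂ) else 0) - lam * (F m * (qp m:ℂ)) * (F j * (q j:ℂ)))
      = (if j = i then (J j:ℂ) * J j else 0)
        + lam * (F i * (q i:ℂ)) * ((J j:ℂ) * (F j * (qp j:ℂ)))
        - lam * (F j * (q j:ℂ)) * ((J i:ℂ) * (F i * (qp i:ℂ)))
        - lam^2 * ((F i * (q i:ℂ)) * (F j * (q j:ℂ))) * (c:ℂ) := by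
    rw [Finset.sum_congr rfl (fun m _ => show _ =
      (if m = i then (J m:ℂ) else 0) * (if m = j then (J m:ℂ) else 0)
      + lam * (F i * (q i:ℂ)) * ((if m = j then (J m:ℂ) else 0) * (F m * (qp m:ℂ)))
      - lam * (F j * (q j:ℂ)) * ((if m = i then (J m:ℂ) else 0) * (F m * (qp m:ℂ)))
      - lam^2 * ((F i * (q i:ℂ)) * (F j * (q j:ℂ))) * ((F m * (qp m:ℂ)) * (F m * (qp m:ℂ)))
      from by ring)]
    rw [Finset.sum_sub_distrib, Finset.sum_sub_distrib, Finset.sum_add_distrib,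
      ← Finset.mul_sum, ← Finset.mul_sum, ← Finset.mul_sum, hcp]
    simp [ite_mul, Finset.sum_ite_eq']
  rw [L, R]
  have keyC : ((J i : ℝ) * q j * (qm i + qp i) : ℂ) = ((J j : ℝ) * q i * (qm j + qp j) : ℂ) := by
    exact_mod_cast congrArg (Complex.ofReal) (key i j)
  push_cast at keyC
  by_cases h : i = j
  · subst h; simp only [if_pos rfl]; ring
  · simp only [if_neg h, if_neg (Ne.symm h)]
    linear_combination lam * F i * F j * keyC
end

section
/- The integrals f_i pairwise commute with respect to the bracket {f,g}_Ω = −(∂f/∂Q)·EJ^{-1}(∂g/∂q) + (∂f/∂q)·EJ^{-1}(∂g/∂Q) modulo the constraint ideal: more precisely, the Dirac bracket {f_i, f_j}_Ω^D = {f_i,f_j}_Ω − ({φ_1,f_i}{φ_2,f_j} − {φ_2,f_i}{φ_1,f_j})/{φ_1,φ_2} vanishes at every point (q,Q) with ⟨q,q⟩ = ⟨Q,Q⟩ = c and ⟨q,J^{-1}Q⟩ ≠ 0. -/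
open Finset

/-- Partial derivative in the `q`-slot (first factor), direction `i`. -/
noncomputable def pdq {n : ℕ} (f : (Fin n → ℝ) × (Fin n → ℝ) → ℝ)
    (i : Fin n) (x : (Fin n → ℝ) × (Fin n → ℝ)) : ℝ :=
  fderiv ℝ f x (Pi.single i 1, 0)

/-- Partial derivative in the `Q`-slot (second factor), direction `i`. -/
noncomputable def pdQ {n : ℕ} (f : (Fin n → ℝ) × (Fin n → ℝ) → ℝ)
    (i : Fin n) (x : (Fin n → ℝ) × (Fin n → ℝ)) : ℝ :=
  fderiv ℝ f x (0, Pi.single i 1)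

/-- The Poisson bracket of the symplectic form Ω = ∑ τ_i J_i dQ_i ∧ dq_i. -/
noncomputable def pbr {n : ℕ} (τ J : Fin n → ℝ)
    (f g : (Fin n → ℝ) × (Fin n → ℝ) → ℝ)
    (x : (Fin n → ℝ) × (Fin n → ℝ)) : ℝ :=
  - ∑ i, pdQ f i x * (τ i * (J i)⁻¹) * pdq g i x
  + ∑ i, pdq f i x * (τ i * (J i)⁻¹) * pdQ g i x

/-- The integrals f_i of the discrete Neumann system. -/
noncomputable def fint {n : ℕ} (τ J : Fin n → ℝ) (c : ℝ) (i : Fin n)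
    (x : (Fin n → ℝ) × (Fin n → ℝ)) : ℝ :=
  c * τ i * (x.1 i)^2 +
    ∑ j ∈ Finset.univ.erase i,
      τ i * τ j * (J j * x.2 j * x.1 i - x.1 j * J i * x.2 i)^2 / ((J i)^2 - (J j)^2)

/-! With `A_ij = J_j Q_j q_i - q_j J_i Q_i` and `B_ij = 2 τ_i τ_j A_ij / (J_i² - J_j²)` one has
`df_i = 2 c τ_i q_i dq_i + ∑_j B_ij dA_ij`. In `{f_i, f_j}` the `c`-terms cancel because
`τ_i² = τ_j² = 1`, and what remains is `∑_l 4 τ_i τ_j τ_l A_ij A_il A_jl S_l` with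
`S_l = 1/((a-c)(b-c)) + 1/((a-b)(a-c)) - 1/((a-b)(b-c))` for `a, b, c = J_i², J_j², J_l²`,
which vanishes by partial fractions. The same formula for `df_i` gives `{⟨q, q⟩, f_i} = 0`, so the
numerator of the Dirac correction vanishes too. -/

noncomputable def neumannMinor {n : ℕ} (J q Q : Fin n → ℝ) (i j : Fin n) : ℝ :=
  J j * Q j * q i - q j * J i * Q i

/-- At `j = i` the denominator vanishes and `x / 0 = 0` makes this `0`, so that sums over
`j ≠ i` can run over all `j`. -/
noncomputable def neumannCoupling {n : ℕ} (τ J q Q : Fin n → ℝ) (i j : Fin n) : ℝ :=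
  2 * τ i * τ j * neumannMinor J q Q i j / (J i ^ 2 - J j ^ 2)

lemma inv_sub_mul_inv_sub_add_inv_sub_mul_inv_sub {K : Type*} [Field K] {a b c : K}
    (hab : a ≠ b) (hac : a ≠ c) (hbc : b ≠ c) :
    (a - c)⁻¹ * (b - c)⁻¹ + (a - b)⁻¹ * (a - c)⁻¹ = (a - b)⁻¹ * (b - c)⁻¹ := by
  have := sub_ne_zero.2 hab
  have := sub_ne_zero.2 hac
  have := sub_ne_zero.2 hbc
  field_simp
  ring

section Algebra

variable {n : ℕ} (τ J : Fin n → ℝ) (q Q : Fin n → ℝ)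

@[simp]
lemma neumannMinor_self (i : Fin n) : neumannMinor J q Q i i = 0 := by
  unfold neumannMinor; ring

lemma neumannMinor_swap (i j : Fin n) : neumannMinor J q Q j i = -neumannMinor J q Q i j := by
  unfold neumannMinor; ring

@[simp]
lemma neumannCoupling_self (i : Fin n) : neumannCoupling τ J q Q i i = 0 := by
  simp [neumannCoupling]

lemma neumannCoupling_comm (i j : Fin n) :
    neumannCoupling τ J q Q j i = neumannCoupling τ J q Q i j := by
  unfold neumannCoupling
  rw [neumannMinor_swap, ← neg_sub (J i ^ 2), div_neg, mul_neg, neg_div, neg_neg]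
  ring

lemma sum_mul_neumannMinor (w : Fin n → ℝ) (j : Fin n) :
    ∑ l, w l * neumannMinor J q Q j l =
      (∑ l, w l * (J l * Q l)) * q j - (∑ l, w l * q l) * (J j * Q j) := by
  rw [Finset.sum_mul, Finset.sum_mul, ← Finset.sum_sub_distrib]
  exact Finset.sum_congr rfl fun l _ => by rw [neumannMinor]; ring

lemma neumannCoupling_three_term (hτ : ∀ k, τ k ^ 2 = 1) (hJ : ∀ i j, i ≠ j → J i ^ 2 ≠ J j ^ 2)
    (i j l : Fin n) :
    τ l * neumannCoupling τ J q Q i l * neumannCoupling τ J q Q j l * neumannMinor J q Q i j +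
      τ i * neumannCoupling τ J q Q i j * (neumannCoupling τ J q Q i l * neumannMinor J q Q j l) -
      τ j * neumannCoupling τ J q Q i j * (neumannCoupling τ J q Q j l * neumannMinor J q Q i l)
      = 0 := by
  rcases eq_or_ne l i with rfl | hli
  · simp
  rcases eq_or_ne l j with rfl | hlj
  · simp
  rcases eq_or_ne i j with rfl | hij
  · simp
  calc _ = 4 * τ i * τ j * τ l * neumannMinor J q Q i j * neumannMinor J q Q i l *
        neumannMinor J q Q j l *
        (τ l ^ 2 * ((J i ^ 2 - J l ^ 2)⁻¹ * (J j ^ 2 - J l ^ 2)⁻¹) +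
          τ i ^ 2 * ((J i ^ 2 - J j ^ 2)⁻¹ * (J i ^ 2 - J l ^ 2)⁻¹) -
          τ j ^ 2 * ((J i ^ 2 - J j ^ 2)⁻¹ * (J j ^ 2 - J l ^ 2)⁻¹)) := by
        simp only [neumannCoupling, div_eq_mul_inv]
        ring
    _ = 0 := by
        rw [hτ i, hτ j, hτ l, one_mul, one_mul, one_mul,
          inv_sub_mul_inv_sub_add_inv_sub_mul_inv_sub (hJ i j hij) (hJ i l hli.symm)
            (hJ j l hlj.symm), sub_self, mul_zero]

end Algebra

lemma hasFDerivAt_fst_apply {ι : Type*} (x : (ι → ℝ) × (ι → ℝ)) (m : ι) :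
    HasFDerivAt (fun y : (ι → ℝ) × (ι → ℝ) => y.1 m)
      ((ContinuousLinearMap.proj m).comp (ContinuousLinearMap.fst ℝ (ι → ℝ) (ι → ℝ))) x :=
  ((ContinuousLinearMap.proj m).comp (ContinuousLinearMap.fst ℝ (ι → ℝ) (ι → ℝ))).hasFDerivAt

lemma hasFDerivAt_snd_apply {ι : Type*} (x : (ι → ℝ) × (ι → ℝ)) (m : ι) :
    HasFDerivAt (fun y : (ι → ℝ) × (ι → ℝ) => y.2 m)
      ((ContinuousLinearMap.proj m).comp (ContinuousLinearMap.snd ℝ (ι → ℝ) (ι → ℝ))) x :=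
  ((ContinuousLinearMap.proj m).comp (ContinuousLinearMap.snd ℝ (ι → ℝ) (ι → ℝ))).hasFDerivAt

section Brackets

variable {n : ℕ} (τ J : Fin n → ℝ) (c : ℝ) (x : (Fin n → ℝ) × (Fin n → ℝ))

lemma fint_eq_sum_univ (i : Fin n) :
    fint τ J c i = fun y => c * τ i * y.1 i ^ 2 +
      ∑ j, τ i * τ j / (J i ^ 2 - J j ^ 2) * neumannMinor J y.1 y.2 i j ^ 2 := by
  funext y
  rw [fint, Finset.sum_erase _ (by simp)]
  refine congrArg _ (Finset.sum_congr rfl fun j _ => ?_)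
  rw [neumannMinor]
  ring

lemma fderiv_fint_apply (i : Fin n) (w : (Fin n → ℝ) × (Fin n → ℝ)) :
    fderiv ℝ (fint τ J c i) x w = 2 * c * τ i * x.1 i * w.1 i +
      ∑ j, neumannCoupling τ J x.1 x.2 i j *
        (neumannMinor J w.1 x.2 i j + neumannMinor J x.1 w.2 i j) := by
  have hA : ∀ j, HasFDerivAt (fun y : (Fin n → ℝ) × (Fin n → ℝ) => neumannMinor J y.1 y.2 i j)
      _ x := fun j =>
    (((hasFDerivAt_snd_apply x j).const_mul (J j)).fun_mul (hasFDerivAt_fst_apply x i)).fun_sub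
      (((hasFDerivAt_fst_apply x j).mul_const (J i)).fun_mul (hasFDerivAt_snd_apply x i))
  have H := (((hasFDerivAt_fst_apply x i).pow 2).const_mul (c * τ i)).fun_add
    (HasFDerivAt.fun_sum (u := Finset.univ) fun j _ =>
      ((hA j).pow 2).const_mul (τ i * τ j / (J i ^ 2 - J j ^ 2)))
  rw [fint_eq_sum_univ, H.fderiv]
  simp only [Nat.add_one_sub_one, pow_one, nsmul_eq_mul, Nat.cast_ofNat, neumannMinor,
    add_apply, smul_apply, ContinuousLinearMap.comp_apply, ContinuousLinearMap.coe_fst',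
    ContinuousLinearMap.coe_snd', ContinuousLinearMap.proj_apply, smul_eq_mul, _root_.sum_apply,
    sub_apply, neumannCoupling]
  congr 1
  · ring
  · exact Finset.sum_congr rfl fun j _ => by ring

lemma pdq_fint (i k : Fin n) :
    pdq (fint τ J c i) k x =
      (if k = i then 2 * c * τ i * x.1 i + ∑ j, neumannCoupling τ J x.1 x.2 i j * (J j * x.2 j)
        else 0) - neumannCoupling τ J x.1 x.2 i k * (J i * x.2 i) := by
  rw [pdq, fderiv_fint_apply]
  by_cases hk : k = i
  · subst hk
    simp [neumannMinor, Pi.single_apply, mul_sub, Finset.sum_sub_distrib]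
  · simp [neumannMinor, Pi.single_apply, hk, Ne.symm hk]

lemma pdQ_fint (i k : Fin n) :
    pdQ (fint τ J c i) k x = neumannCoupling τ J x.1 x.2 i k * (J k * x.1 i) -
      (if k = i then J i * ∑ j, neumannCoupling τ J x.1 x.2 i j * x.1 j else 0) := by
  rw [pdQ, fderiv_fint_apply]
  by_cases hk : k = i
  · subst hk
    simp only [Pi.zero_apply, mul_zero, neumannMinor, zero_mul, sub_self, Pi.single_apply,
      mul_ite, mul_one, ite_mul, zero_add, mul_sub, Finset.sum_sub_distrib,
      Finset.sum_ite_eq', Finset.mem_univ, ↓reduceIte, neumannCoupling_self, zero_sub,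
      Finset.mul_sum, neg_inj]
    exact Finset.sum_congr rfl fun _ _ => by ring
  · simp [neumannMinor, Pi.single_apply, hk, Ne.symm hk]

lemma fderiv_pseudoNormSq_apply (w : (Fin n → ℝ) × (Fin n → ℝ)) :
    fderiv ℝ (fun y : (Fin n → ℝ) × (Fin n → ℝ) => ∑ m, τ m * y.1 m * y.1 m) x w =
      ∑ m, 2 * τ m * x.1 m * w.1 m := by
  have H := HasFDerivAt.fun_sum (u := Finset.univ) fun m _ =>
    ((hasFDerivAt_fst_apply x m).const_mul (τ m)).fun_mul (hasFDerivAt_fst_apply x m)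
  rw [H.fderiv]
  simp only [_root_.sum_apply, add_apply, smul_apply, ContinuousLinearMap.comp_apply,
    ContinuousLinearMap.coe_fst', ContinuousLinearMap.proj_apply, smul_eq_mul]
  exact Finset.sum_congr rfl fun m _ => by ring

lemma pdq_pseudoNormSq (k : Fin n) :
    pdq (fun y : (Fin n → ℝ) × (Fin n → ℝ) => ∑ m, τ m * y.1 m * y.1 m) k x = 2 * τ k * x.1 k := by
  simp [pdq, fderiv_pseudoNormSq_apply, Pi.single_apply]

lemma pdQ_pseudoNormSq (k : Fin n) :
    pdQ (fun y : (Fin n → ℝ) × (Fin n → ℝ) => ∑ m, τ m * y.1 m * y.1 m) k x = 0 := by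
  simp [pdQ, fderiv_pseudoNormSq_apply]

lemma pbr_eq_sum (f g : (Fin n → ℝ) × (Fin n → ℝ) → ℝ) :
    pbr τ J f g x = ∑ k, τ k * (J k)⁻¹ * (pdq f k x * pdQ g k x - pdQ f k x * pdq g k x) := by
  rw [pbr, neg_add_eq_sub, ← Finset.sum_sub_distrib]
  exact Finset.sum_congr rfl fun k _ => by ring

lemma pbr_self (f : (Fin n → ℝ) × (Fin n → ℝ) → ℝ) : pbr τ J f f x = 0 := by
  simp [pbr_eq_sum, mul_comm]

lemma pbr_pseudoNormSq_fint (hτ : ∀ k, τ k ^ 2 = 1) (hJ0 : ∀ k, J k ≠ 0) (i : Fin n) :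
    pbr τ J (fun y => ∑ m, τ m * y.1 m * y.1 m) (fint τ J c i) x = 0 := by
  set B := neumannCoupling τ J x.1 x.2 i
  have hsummand : ∀ k, τ k * (J k)⁻¹ *
      (pdq (fun y => ∑ m, τ m * y.1 m * y.1 m) k x * pdQ (fint τ J c i) k x -
        pdQ (fun y => ∑ m, τ m * y.1 m * y.1 m) k x * pdq (fint τ J c i) k x) =
      2 * x.1 i * (B k * x.1 k) - if k = i then 2 * x.1 i * ∑ j, B j * x.1 j else 0 := by
    intro k
    rw [pdq_pseudoNormSq, pdQ_pseudoNormSq, pdQ_fint]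
    have := hJ0 k
    split_ifs with hk
    · subst hk
      field_simp
      linear_combination (2 * x.1 k * J k * (B k * x.1 k - ∑ j, B j * x.1 j)) * hτ k
    · field_simp
      linear_combination (2 * x.1 k * J k * B k * x.1 i) * hτ k
  rw [pbr_eq_sum, Finset.sum_congr rfl fun k _ => hsummand k, Finset.sum_sub_distrib,
    Finset.sum_ite_eq', if_pos (Finset.mem_univ i), Finset.mul_sum, sub_self]

lemma pbr_fint_fint (hτ : ∀ k, τ k ^ 2 = 1) (hJ0 : ∀ k, J k ≠ 0)
    (hJ : ∀ i j, i ≠ j → J i ^ 2 ≠ J j ^ 2) (i j : Fin n) :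
    pbr τ J (fint τ J c i) (fint τ J c j) x = 0 := by
  rcases eq_or_ne i j with rfl | hij
  · exact pbr_self τ J x _
  set B := neumannCoupling τ J x.1 x.2
  set A := neumannMinor J x.1 x.2
  have hsummand : ∀ k, τ k * (J k)⁻¹ *
      (pdq (fint τ J c i) k x * pdQ (fint τ J c j) k x -
        pdQ (fint τ J c i) k x * pdq (fint τ J c j) k x) =
      τ k * B i k * B j k * A i j +
        (if k = i then τ i * B i j * (2 * c * τ i * x.1 i * x.1 j + ∑ l, B i l * A j l)
          else 0) -
        (if k = j then τ j * B i j * (2 * c * τ j * x.1 i * x.1 j + ∑ l, B j l * A i l)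
          else 0) := by
    intro k
    rw [pdq_fint, pdQ_fint, pdq_fint, pdQ_fint]
    have := hJ0 k
    split_ifs with hki hkj hkj
    · exact absurd (hki.symm.trans hkj) hij
    · subst hki
      rw [sum_mul_neumannMinor, neumannCoupling_comm τ J x.1 x.2 k j]
      simp only [B, neumannCoupling_self]
      field_simp
      ring
    · subst hkj
      rw [sum_mul_neumannMinor]
      simp only [B, neumannCoupling_self]
      field_simp
      ring
    · simp only [A, neumannMinor]
      field_simp
      ring
  have hthree := Finset.sum_eq_zero fun l (_ : l ∈ Finset.univ) =>
    neumannCoupling_three_term τ J x.1 x.2 hτ hJ i j l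
  rw [Finset.sum_sub_distrib, Finset.sum_add_distrib, ← Finset.mul_sum, ← Finset.mul_sum]
    at hthree
  rw [pbr_eq_sum, Finset.sum_congr rfl fun k _ => hsummand k, Finset.sum_sub_distrib,
    Finset.sum_add_distrib, Finset.sum_ite_eq', Finset.sum_ite_eq', if_pos (Finset.mem_univ i),
    if_pos (Finset.mem_univ j)]
  linear_combination hthree + 2 * c * x.1 i * x.1 j * B i j * (hτ i - hτ j)

end Brackets

theorem stmt12_general (n : ℕ) (τ J : Fin n → ℝ)
    (hτ : ∀ i, τ i = 1 ∨ τ i = -1) (hJ0 : ∀ i, J i ≠ 0)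
    (hJ : ∀ i j, i ≠ j → (J i)^2 ≠ (J j)^2)
    (c : ℝ)
    (φ₁ φ₂ : (Fin n → ℝ) × (Fin n → ℝ) → ℝ)
    (hφ₁ : ∀ x, φ₁ x = ∑ i, τ i * x.1 i * x.1 i)
    (x : (Fin n → ℝ) × (Fin n → ℝ)) :
    ∀ i j,
      pbr τ J (fint τ J c i) (fint τ J c j) x -
        (pbr τ J φ₁ (fint τ J c i) x * pbr τ J φ₂ (fint τ J c j) x -
         pbr τ J φ₂ (fint τ J c i) x * pbr τ J φ₁ (fint τ J c j) x) /
          pbr τ J φ₁ φ₂ x = 0 := by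
  intro i j
  have hτ2 : ∀ k, τ k ^ 2 = 1 := fun k => by rcases hτ k with h | h <;> simp [h]
  obtain rfl : φ₁ = fun y => ∑ m, τ m * y.1 m * y.1 m := funext hφ₁
  rw [pbr_fint_fint τ J c x hτ2 hJ0 hJ, pbr_pseudoNormSq_fint τ J c x hτ2 hJ0,
    pbr_pseudoNormSq_fint τ J c x hτ2 hJ0]
  simp

theorem stmt12 (n : ℕ) (τ J : Fin n → ℝ)
    (hτ : ∀ i, τ i = 1 ∨ τ i = -1) (hJ0 : ∀ i, J i ≠ 0)
    (hJ : ∀ i j, i ≠ j → (J i)^2 ≠ (J j)^2)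
    (c : ℝ)
    (φ₁ φ₂ : (Fin n → ℝ) × (Fin n → ℝ) → ℝ)
    (hφ₁ : ∀ x, φ₁ x = ∑ i, τ i * x.1 i * x.1 i)
    (hφ₂ : ∀ x, φ₂ x = ∑ i, τ i * x.2 i * x.2 i)
    (x : (Fin n → ℝ) × (Fin n → ℝ))
    (hx1 : φ₁ x = c) (hx2 : φ₂ x = c)
    (hK : ∑ i, τ i * x.1 i * ((J i)⁻¹ * x.2 i) ≠ 0) :
    ∀ i j,
      pbr τ J (fint τ J c i) (fint τ J c j) x -
        (pbr τ J φ₁ (fint τ J c i) x * pbr τ J φ₂ (fint τ J c j) x -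
         pbr τ J φ₂ (fint τ J c i) x * pbr τ J φ₁ (fint τ J c j) x) /
          pbr τ J φ₁ φ₂ x = 0 :=
  stmt12_general n τ J hτ hJ0 hJ c φ₁ φ₂ hφ₁ x
end

section
/- The discrete Lagrangian L(q,Q) = ⟨q,JQ⟩ Poisson-commutes with each f_i on the light-like cone: with the bracket {f,g}_Ω as above and c = 0, {f_i, L}_Ω = 0 identically for all (q,Q) ∈ ℝ^n × ℝ^n. -/
open Finset

/-- The integrals f_i of the light-like (c = 0) discrete Neumann system. -/
noncomputable def fint0 {n : ℕ} (τ J : Fin n → ℝ) (i : Fin n)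
    (x : (Fin n → ℝ) × (Fin n → ℝ)) : ℝ :=
  ∑ j ∈ Finset.univ.erase i,
    τ i * τ j * (J j * x.2 j * x.1 i - x.1 j * J i * x.2 i)^2 / ((J i)^2 - (J j)^2)


/-!
Since τ_k² = 1, the bracket with L = ∑ τ_k J_k q_k Q_k is the derivative along the vector field
(q, -Q), which generates the scaling (q, Q) ↦ (a q, a⁻¹ Q). Each f_i is built from the expressions
J_j Q_j q_i - q_j J_i Q_i, which are bilinear in (q, Q) and hence invariant under that scaling.
-/

theorem ContinuousLinearMap.sum_apply_single_prod {n : ℕ}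
    (φ : (Fin n → ℝ) × (Fin n → ℝ) →L[ℝ] ℝ) (v w : Fin n → ℝ) :
    ∑ k, (φ (Pi.single k 1, 0) * v k + φ (0, Pi.single k 1) * w k) = φ (v, w) := by
  have hvw : (v, w) = ∑ k, (v k • ((Pi.single k 1 : Fin n → ℝ), (0 : Fin n → ℝ))
      + w k • ((0 : Fin n → ℝ), (Pi.single k 1 : Fin n → ℝ))) := by
    ext m <;> simp [Prod.fst_sum, Prod.snd_sum, Pi.single_apply]
  rw [hvw, map_sum]
  simp only [map_add, map_smul, smul_eq_mul, mul_comm]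

theorem fderiv_apply_eq_zero_of_scaling_invariant {E F : Type*}
    [NormedAddCommGroup E] [NormedSpace ℝ E] [NormedAddCommGroup F] [NormedSpace ℝ F]
    {f : E × F → ℝ} {x : E × F} (hf : DifferentiableAt ℝ f x)
    (hinv : ∀ a : ℝ, 0 < a → f (a • x.1, a⁻¹ • x.2) = f x) :
    fderiv ℝ f x (x.1, -x.2) = 0 := by
  set γ : ℝ → E × F := fun t => (Real.exp t • x.1, Real.exp (-t) • x.2)
  have hγ : HasDerivAt γ (x.1, -x.2) 0 := by
    have h1 := (Real.hasDerivAt_exp 0).smul_const x.1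
    have h2 := ((Real.hasDerivAt_exp (-0)).comp 0 (hasDerivAt_neg 0)).smul_const x.2
    simpa using h1.prodMk h2
  have hconst : f ∘ γ = fun _ => f x := by
    funext t
    simpa [γ, Real.exp_neg] using hinv (Real.exp t) (Real.exp_pos t)
  have hcomp := hf.hasFDerivAt.comp_hasDerivAt_of_eq 0 hγ (by simp [γ])
  rw [hconst] at hcomp
  exact hcomp.unique (hasDerivAt_const 0 (f x))

theorem fderiv_sum_mul_fst_mul_snd {n : ℕ} (c : Fin n → ℝ) (x v : (Fin n → ℝ) × (Fin n → ℝ)) :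
    fderiv ℝ (fun p : (Fin n → ℝ) × (Fin n → ℝ) => ∑ j, c j * p.1 j * p.2 j) x v
      = ∑ j, c j * (v.1 j * x.2 j + x.1 j * v.2 j) := by
  have hfst : ∀ j, HasFDerivAt (fun p : (Fin n → ℝ) × (Fin n → ℝ) => p.1 j)
      ((ContinuousLinearMap.proj j).comp (ContinuousLinearMap.fst ℝ _ _)) x :=
    fun j => (hasFDerivAt_apply (𝕜 := ℝ) j x.1).comp x hasFDerivAt_fst
  have hsnd : ∀ j, HasFDerivAt (fun p : (Fin n → ℝ) × (Fin n → ℝ) => p.2 j)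
      ((ContinuousLinearMap.proj j).comp (ContinuousLinearMap.snd ℝ _ _)) x :=
    fun j => (hasFDerivAt_apply (𝕜 := ℝ) j x.2).comp x hasFDerivAt_snd
  rw [(HasFDerivAt.fun_sum fun j _ => ((hfst j).const_mul (c j)).fun_mul (hsnd j)).fderiv]
  simp only [_root_.sum_apply, _root_.add_apply, _root_.smul_apply, smul_eq_mul,
    ContinuousLinearMap.comp_apply, ContinuousLinearMap.coe_fst', ContinuousLinearMap.coe_snd',
    ContinuousLinearMap.proj_apply]
  exact sum_congr rfl fun j _ => by ring

theorem pdq_sum_mul_fst_mul_snd {n : ℕ} (c : Fin n → ℝ) (k : Fin n)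
    (x : (Fin n → ℝ) × (Fin n → ℝ)) :
    pdq (fun p => ∑ j, c j * p.1 j * p.2 j) k x = c k * x.2 k := by
  simp [pdq, fderiv_sum_mul_fst_mul_snd, Pi.single_apply]

theorem pdQ_sum_mul_fst_mul_snd {n : ℕ} (c : Fin n → ℝ) (k : Fin n)
    (x : (Fin n → ℝ) × (Fin n → ℝ)) :
    pdQ (fun p => ∑ j, c j * p.1 j * p.2 j) k x = c k * x.1 k := by
  simp [pdQ, fderiv_sum_mul_fst_mul_snd, Pi.single_apply]

theorem pbr_sum_mul_fst_mul_snd {n : ℕ} {τ J : Fin n → ℝ} (hτ : ∀ k, τ k ^ 2 = 1)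
    (hJ : ∀ k, J k ≠ 0) (f : (Fin n → ℝ) × (Fin n → ℝ) → ℝ) (x : (Fin n → ℝ) × (Fin n → ℝ)) :
    pbr τ J f (fun p => ∑ j, τ j * J j * p.1 j * p.2 j) x = fderiv ℝ f x (x.1, -x.2) := by
  rw [← ContinuousLinearMap.sum_apply_single_prod, pbr, neg_add_eq_sub, ← sum_sub_distrib]
  refine sum_congr rfl fun k _ => ?_
  rw [pdq_sum_mul_fst_mul_snd, pdQ_sum_mul_fst_mul_snd, ← pdq, ← pdQ, Pi.neg_apply]
  field_simp [hJ k]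
  linear_combination (pdq f k x * x.1 k - pdQ f k x * x.2 k) * hτ k

theorem fint0_smul_inv_smul {n : ℕ} (τ J : Fin n → ℝ) (i : Fin n)
    (x : (Fin n → ℝ) × (Fin n → ℝ)) {a : ℝ} (ha : a ≠ 0) : fint0 τ J i (a • x.1, a⁻¹ • x.2) = fint0 τ J i x := by
  refine sum_congr rfl fun j _ => ?_
  simp only [Pi.smul_apply, smul_eq_mul]
  congr 3
  field_simp

theorem differentiable_fint0 {n : ℕ} (τ J : Fin n → ℝ) (i : Fin n) :
    Differentiable ℝ (fint0 τ J i) := by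
  unfold fint0
  fun_prop

theorem stmt13_general (n : ℕ) (τ J : Fin n → ℝ)
    (hτ : ∀ i, τ i = 1 ∨ τ i = -1) (hJ0 : ∀ i, J i ≠ 0)
    (L : (Fin n → ℝ) × (Fin n → ℝ) → ℝ)
    (hL : ∀ x, L x = ∑ i, τ i * J i * x.1 i * x.2 i) :
    ∀ (i : Fin n) (x : (Fin n → ℝ) × (Fin n → ℝ)),
      pbr τ J (fint0 τ J i) L x = 0 := by
  intro i x
  obtain rfl : L = fun p => ∑ j, τ j * J j * p.1 j * p.2 j := funext hL
  have hτ2 : ∀ k, τ k ^ 2 = 1 := fun k => by rcases hτ k with h | h <;> simp [h]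
  rw [pbr_sum_mul_fst_mul_snd hτ2 hJ0]
  exact fderiv_apply_eq_zero_of_scaling_invariant (differentiable_fint0 τ J i x)
    fun a ha => fint0_smul_inv_smul τ J i x ha.ne'

theorem stmt13 (n : ℕ) (τ J : Fin n → ℝ)
    (hτ : ∀ i, τ i = 1 ∨ τ i = -1) (hJ0 : ∀ i, J i ≠ 0)
    (hJ : ∀ i j, i ≠ j → (J i)^2 ≠ (J j)^2)
    (L : (Fin n → ℝ) × (Fin n → ℝ) → ℝ)
    (hL : ∀ x, L x = ∑ i, τ i * J i * x.1 i * x.2 i) :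
    ∀ (i : Fin n) (x : (Fin n → ℝ) × (Fin n → ℝ)),
      pbr τ J (fint0 τ J i) L x = 0 :=
  stmt13_general n τ J hτ hJ0 L hL
end

section
/- If λ_k ≠ 0 is chosen via λ_k = 2⟨J^{-1}q_k,q_{k-1}⟩/⟨J^{-2}q_k,q_k⟩ and the constraints ⟨q_{k-1},q_{k-1}⟩ = ⟨q_k,q_k⟩ = c hold, then q_{k+1} := λ_k J^{-1}q_k − q_{k-1} automatically satisfies ⟨q_{k+1},q_{k+1}⟩ = c (the discrete flow preserves the pseudo-sphere). -/
open Finset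

theorem stmt18 (n : ℕ) (τ J : Fin n → ℝ)
    (hτ : ∀ i, τ i = 1 ∨ τ i = -1) (hJ : ∀ i, J i ≠ 0)
    (c : ℝ) (qm q qp : Fin n → ℝ) (lam : ℝ)
    (hden : ∑ i, τ i * ((J i)⁻¹)^2 * q i * q i ≠ 0)
    (hlam : lam = 2 * (∑ i, τ i * (J i)⁻¹ * q i * qm i) /
      (∑ i, τ i * ((J i)⁻¹)^2 * q i * q i))
    (hlam0 : lam ≠ 0)
    (hm : ∑ i, τ i * qm i * qm i = c)
    (h0 : ∑ i, τ i * q i * q i = c)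
    (heq : ∀ i, qp i = lam * (J i)⁻¹ * q i - qm i) :
    ∑ i, τ i * qp i * qp i = c := by
  have hlamD : lam * (∑ i, τ i * ((J i)⁻¹)^2 * q i * q i)
      = 2 * (∑ i, τ i * (J i)⁻¹ * q i * qm i) := by
    rw [hlam, div_mul_cancel₀ _ hden]
  have hexp : ∀ i, τ i * qp i * qp i =
      lam * (lam * (τ i * ((J i)⁻¹)^2 * q i * q i))
      - 2 * (lam * (τ i * (J i)⁻¹ * q i * qm i))
      + τ i * qm i * qm i := by
    intro i; rw [heq i]; ring
  calc ∑ i, τ i * qp i * qp i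
      = lam * (lam * ∑ i, τ i * ((J i)⁻¹)^2 * q i * q i)
        - 2 * (lam * ∑ i, τ i * (J i)⁻¹ * q i * qm i)
        + ∑ i, τ i * qm i * qm i := by
        simp_rw [hexp, Finset.sum_add_distrib, Finset.sum_sub_distrib,
          ← Finset.mul_sum]
    _ = c := by linear_combination lam * hlamD + hm
end

section
/- The 2-form Ω = ∑ τ_i J_i dQ_i ∧ dq_i is preserved by the discrete Neumann map: for the map Φ(q,Q) = (Q, λ(q,Q)J^{-1}Q − q) with λ(q,Q) = 2⟨J^{-1}Q,q⟩/⟨J^{-2}Q,Q⟩, defined on the open set of P_c = {⟨q,q⟩=c, ⟨Q,Q⟩=c} where ⟨J^{-2}Q,Q⟩ ≠ 0, the pullback Φ*Ω restricted to the tangent spaces of P_c equals Ω restricted to P_c. -/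
/-!
The differential of `Φ(q, Q) = (Q, λ J⁻¹Q - q)` sends `(δq, δQ)` to
`(δQ, dλ(δq, δQ) J⁻¹Q + λ J⁻¹δQ - δq)`. In `Ω(dΦ u, dΦ v)` the factor `J` cancels `J⁻¹`; the terms
carrying `λ` are symmetric in `u, v` and drop out, and the `dλ` terms are multiples of
`⟨Q, δQ_u⟩` and `⟨Q, δQ_v⟩`, which vanish on the tangent space of the pseudo-sphere `⟨Q, Q⟩ = c`.
What is left is `Ω(u, v)`.
-/

open Finset

section

variable {n : ℕ}

def neumannForm (τ J : Fin n → ℝ) (u v : (Fin n → ℝ) × (Fin n → ℝ)) : ℝ :=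
  ∑ i, τ i * J i * (u.2 i * v.1 i - v.2 i * u.1 i)

noncomputable def neumannMultiplier (τ J : Fin n → ℝ) (p : (Fin n → ℝ) × (Fin n → ℝ)) : ℝ :=
  2 * (∑ i, τ i * (J i)⁻¹ * p.2 i * p.1 i) / (∑ i, τ i * ((J i)⁻¹) ^ 2 * p.2 i * p.2 i)

def neumannStep (K : Fin n → ℝ) (f : (Fin n → ℝ) × (Fin n → ℝ) → ℝ)
    (p : (Fin n → ℝ) × (Fin n → ℝ)) : (Fin n → ℝ) × (Fin n → ℝ) :=
  (p.2, fun i => f p * K i * p.2 i - p.1 i)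

theorem differentiableAt_neumannMultiplier {τ J : Fin n → ℝ} {x : (Fin n → ℝ) × (Fin n → ℝ)}
    (hden : ∑ i, τ i * ((J i)⁻¹) ^ 2 * x.2 i * x.2 i ≠ 0) :
    DifferentiableAt ℝ (neumannMultiplier τ J) x := by
  unfold neumannMultiplier
  fun_prop (disch := exact hden)

theorem fderiv_neumannStep {f : (Fin n → ℝ) × (Fin n → ℝ) → ℝ} {x : (Fin n → ℝ) × (Fin n → ℝ)}
    (hf : DifferentiableAt ℝ f x) (K : Fin n → ℝ) (w : (Fin n → ℝ) × (Fin n → ℝ)) :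
    fderiv ℝ (neumannStep K f) x w =
      (w.2, fun i => fderiv ℝ f x w * K i * x.2 i + f x * K i * w.2 i - w.1 i) := by
  unfold neumannStep
  rw [DifferentiableAt.fderiv_prodMk (by fun_prop) (by fun_prop), fderiv_snd,
    fderiv_pi (fun i => by fun_prop)]
  ext i
  · simp
  · simp only [ContinuousLinearMap.prod_apply, ContinuousLinearMap.pi_apply]
    rw [fderiv_fun_sub (by fun_prop) (by fun_prop), fderiv_fun_mul (by fun_prop) (by fun_prop),
      fderiv_mul_const hf, fderiv_apply differentiableAt_snd, fderiv_apply differentiableAt_fst,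
      fderiv_fst, fderiv_snd]
    simp
    ring

theorem neumannForm_step_images {τ J : Fin n → ℝ} (hJ : ∀ i, J i ≠ 0) (Q : Fin n → ℝ)
    (a b l : ℝ) (u v : (Fin n → ℝ) × (Fin n → ℝ)) :
    neumannForm τ J (u.2, fun i => a * (J i)⁻¹ * Q i + l * (J i)⁻¹ * u.2 i - u.1 i)
        (v.2, fun i => b * (J i)⁻¹ * Q i + l * (J i)⁻¹ * v.2 i - v.1 i) =
      neumannForm τ J u v + a * ∑ i, τ i * Q i * v.2 i - b * ∑ i, τ i * Q i * u.2 i := by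
  simp only [neumannForm, mul_sum, ← sum_add_distrib, ← sum_sub_distrib]
  refine sum_congr rfl fun i _ => ?_
  field_simp [hJ i]
  ring

end

theorem stmt19_general (n : ℕ) (τ J : Fin n → ℝ)
    (hJ : ∀ i, J i ≠ 0)
    (Φ : (Fin n → ℝ) × (Fin n → ℝ) → (Fin n → ℝ) × (Fin n → ℝ))
    (hΦ : ∀ x, Φ x = (x.2, fun i =>
      (2 * (∑ i, τ i * (J i)⁻¹ * x.2 i * x.1 i) /
        (∑ i, τ i * ((J i)⁻¹)^2 * x.2 i * x.2 i)) * (J i)⁻¹ * x.2 i - x.1 i))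
    (Ω : ((Fin n → ℝ) × (Fin n → ℝ)) → ((Fin n → ℝ) × (Fin n → ℝ)) → ℝ)
    (hΩ : ∀ u v, Ω u v = ∑ i, τ i * J i * (u.2 i * v.1 i - v.2 i * u.1 i))
    (x : (Fin n → ℝ) × (Fin n → ℝ))
    (hden : ∑ i, τ i * ((J i)⁻¹)^2 * x.2 i * x.2 i ≠ 0) :
    ∀ u v : (Fin n → ℝ) × (Fin n → ℝ),
      (∑ i, τ i * x.1 i * u.1 i = 0) → (∑ i, τ i * x.2 i * u.2 i = 0) →
      (∑ i, τ i * x.1 i * v.1 i = 0) → (∑ i, τ i * x.2 i * v.2 i = 0) →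
      Ω (fderiv ℝ Φ x u) (fderiv ℝ Φ x v) = Ω u v := by
  intro u v _ hu _ hv
  have hΦ' : Φ = neumannStep (fun i => (J i)⁻¹) (neumannMultiplier τ J) := funext hΦ
  have hΩ' : Ω = neumannForm τ J := funext₂ hΩ
  have hmult := differentiableAt_neumannMultiplier hden
  subst hΦ' hΩ'
  rw [fderiv_neumannStep hmult, fderiv_neumannStep hmult, neumannForm_step_images hJ, hu, hv]
  ring

theorem stmt19 (n : ℕ) (τ J : Fin n → ℝ)
    (hτ : ∀ i, τ i = 1 ∨ τ i = -1) (hJ : ∀ i, J i ≠ 0)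
    (c : ℝ) (hc : c = -1 ∨ c = 0 ∨ c = 1)
    (Φ : (Fin n → ℝ) × (Fin n → ℝ) → (Fin n → ℝ) × (Fin n → ℝ))
    (hΦ : ∀ x, Φ x = (x.2, fun i =>
      (2 * (∑ i, τ i * (J i)⁻¹ * x.2 i * x.1 i) /
        (∑ i, τ i * ((J i)⁻¹)^2 * x.2 i * x.2 i)) * (J i)⁻¹ * x.2 i - x.1 i))
    (Ω : ((Fin n → ℝ) × (Fin n → ℝ)) → ((Fin n → ℝ) × (Fin n → ℝ)) → ℝ)
    (hΩ : ∀ u v, Ω u v = ∑ i, τ i * J i * (u.2 i * v.1 i - v.2 i * u.1 i))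
    (x : (Fin n → ℝ) × (Fin n → ℝ))
    (hx1 : ∑ i, τ i * x.1 i * x.1 i = c)
    (hx2 : ∑ i, τ i * x.2 i * x.2 i = c)
    (hden : ∑ i, τ i * ((J i)⁻¹)^2 * x.2 i * x.2 i ≠ 0) :
    ∀ u v : (Fin n → ℝ) × (Fin n → ℝ),
      (∑ i, τ i * x.1 i * u.1 i = 0) → (∑ i, τ i * x.2 i * u.2 i = 0) →
      (∑ i, τ i * x.1 i * v.1 i = 0) → (∑ i, τ i * x.2 i * v.2 i = 0) →
      Ω (fderiv ℝ Φ x u) (fderiv ℝ Φ x v) = Ω u v :=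
  stmt19_general n τ J hJ Φ hΦ Ω hΩ x hden
end
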